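/- arXiv:2001.00908 — 11 statements merged into one kernel-verified Lean document; each statement's English description precedes it below -/
import Mathlib

section
/- Amalgamation of selections: Let A be a finite simplicial complex, let f : β^l A → β^k A be a simplicial map with l ≥ k, and let s : β^{k+1}A → β^k A be an elementary selection. Then there exists an elementary selection s′ : β^{l+1}A → β^l A with f ∘ s′ = s ∘ βf. -/
/-- An abstract simplicial complex: a family of finite nonempty sets closed under
taking nonempty subsets. -/
def IsComplex {V : Type*} (C : Set (Finset V)) : Prop :=
  (∀ σ ∈ C, σ.Nonempty) ∧ ∀ σ ∈ C, ∀ τ : Finset V, τ ⊆ σ → τ.Nonempty → τ ∈ C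

/-- The barycentric subdivision of `C`: vertices are the faces of `C`, and faces
are the nonempty finite chains of faces of `C` under inclusion. -/
def bary {V : Type*} (C : Set (Finset V)) : Set (Finset (Finset V)) :=
  { S | S.Nonempty ∧ (↑S : Set (Finset V)) ⊆ C ∧ IsChain (· ⊆ ·) (↑S : Set (Finset V)) }

/-- `f` is a simplicial map from `C` to `D`: the image of every face of `C` is a face of `D`. -/
def IsSimplicial {V W : Type*} [DecidableEq W]
    (C : Set (Finset V)) (D : Set (Finset W)) (f : V → W) : Prop :=
  ∀ σ ∈ C, σ.image f ∈ D


universe u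

/-- The vertex type of the `n`-fold iterated barycentric subdivision of a complex
on vertex type `V`. -/
def IterV (V : Type u) : ℕ → Type u
  | 0 => V
  | n + 1 => Finset (IterV V n)

instance iterVDecEq {V : Type u} [DecidableEq V] : ∀ n, DecidableEq (IterV V n)
  | 0 => inferInstanceAs (DecidableEq V)
  | n + 1 =>
    haveI := iterVDecEq (V := V) n
    inferInstanceAs (DecidableEq (Finset (IterV V n)))

/-- The `n`-fold iterated barycentric subdivision `β^n A`. -/
def iterBary {V : Type u} (A : Set (Finset V)) : (n : ℕ) → Set (Finset (IterV V n))
  | 0 => A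
  | n + 1 => bary (iterBary A n)

/-- Amalgamation of selections: given a simplicial map `f : β^l A → β^k A` with `l ≥ k`
and an elementary selection `s : β^{k+1}A → β^k A`, there is an elementary selection
`s' : β^{l+1}A → β^l A` with `f ∘ s' = s ∘ βf` (as maps on the vertices of `β^{l+1}A`,
i.e. the faces of `β^l A`). -/
theorem selection_amalgamation {V : Type u} [DecidableEq V] {A : Set (Finset V)}
    (hA : IsComplex A) (hfin : A.Finite)
    {l k : ℕ} (hlk : k ≤ l)
    (f : IterV V l → IterV V k)
    (hf : ∀ σ ∈ iterBary A l, Finset.image f σ ∈ iterBary A k)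
    (s : IterV V (k + 1) → IterV V k)
    (hs : ∀ σ ∈ iterBary A k, s σ ∈ σ) :
    ∃ s' : IterV V (l + 1) → IterV V l,
      (∀ σ ∈ iterBary A l, s' σ ∈ σ) ∧
      ∀ σ ∈ iterBary A l, f (s' σ) = s (Finset.image f σ) := by
  have hne : Nonempty (IterV V l) := by
    cases l with
    | zero =>
      have hk : k = 0 := Nat.le_zero.mp hlk
      subst hk
      exact ⟨s (show IterV V (0+1) from (∅ : Finset V))⟩
    | succ m => exact ⟨show IterV V (m+1) from (∅ : Finset (IterV V m))⟩
  classical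
  have key : ∀ σ ∈ iterBary A l, ∃ v ∈ σ, f v = s (Finset.image f σ) := by
    intro σ hσ
    have h1 := hs _ (hf σ hσ)
    rcases Finset.mem_image.mp h1 with ⟨v, hv, hfv⟩
    exact ⟨v, hv, hfv⟩
  show ∃ s' : Finset (IterV V l) → IterV V l,
      (∀ σ ∈ iterBary A l, s' σ ∈ σ) ∧
      ∀ σ ∈ iterBary A l, f (s' σ) = s (Finset.image f σ)
  refine ⟨fun σ => if h : ∃ v ∈ σ, f v = s (Finset.image f σ) then h.choose
      else Classical.arbitrary _, ?_, ?_⟩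
  · intro σ hσ
    have h := key σ hσ
    simp only [dif_pos h]
    exact h.choose_spec.1
  · intro σ hσ
    have h := key σ hσ
    simp only [dif_pos h]
    exact h.choose_spec.2
end

section
/- Every map in S(A) is of the form β^k(1_A) for some k ≥ 0, or is a composition of maps of the form β^k(s) where s is an elementary selection and k ≥ 0. -/
universe u

/-- The category `S(A)` of selections on `A`: the smallest family of simplicial maps among
iterated barycentric subdivisions `β^k A` containing all elementary selections
`β^{k+1}A → β^k A` and the identity `1_A`, closed under composition and under the
barycentric-subdivision operation `f ↦ βf`. -/
inductive Sel {V : Type u} [DecidableEq V] (A : Set (Finset V)) :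
    (l k : ℕ) → (IterV V l → IterV V k) → Prop
  | elem (k : ℕ) (s : IterV V (k + 1) → IterV V k)
      (hs : ∀ σ ∈ iterBary A k, s σ ∈ σ) : Sel A (k + 1) k s
  | id : Sel A 0 0 (fun x => x)
  | comp {l m k : ℕ} {f : IterV V m → IterV V k} {g : IterV V l → IterV V m} :
      Sel A m k f → Sel A l m g → Sel A l k (f ∘ g)
  | bary {l k : ℕ} {f : IterV V l → IterV V k} :
      Sel A l k f → Sel A (l + 1) (k + 1) (fun σ => Finset.image f σ)

/-- `β^k(1_A)`: the `k`-fold barycentric subdivision of the identity map on `A`. -/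
def idIter (V : Type u) [DecidableEq V] : (k : ℕ) → IterV V k → IterV V k
  | 0 => fun x => x
  | k + 1 => fun σ => Finset.image (idIter V k) σ

/-- `β^j(f)`: the `j`-fold barycentric subdivision of a simplicial map `f`. -/
def baryPow {V : Type u} [DecidableEq V] {l k : ℕ} (f : IterV V l → IterV V k) :
    (j : ℕ) → IterV V (l + j) → IterV V (k + j)
  | 0 => f
  | j + 1 => fun σ => Finset.image (baryPow f j) σ

/-- Compositions of maps of the form `β^j(s)`, `s` an elementary selection. -/
inductive SelCompPow {V : Type u} [DecidableEq V] (A : Set (Finset V)) :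
    (l k : ℕ) → (IterV V l → IterV V k) → Prop
  | pow (k j : ℕ) (s : IterV V (k + 1) → IterV V k)
      (hs : ∀ σ ∈ iterBary A k, s σ ∈ σ) :
      SelCompPow A (k + 1 + j) (k + j) (baryPow s j)
  | comp {l m k : ℕ} {f : IterV V m → IterV V k} {g : IterV V l → IterV V m} :
      SelCompPow A m k f → SelCompPow A l m g → SelCompPow A l k (f ∘ g)

theorem idIter_eq_id (V : Type u) [DecidableEq V] : ∀ k, idIter V k = id
  | 0 => rfl
  | k + 1 => funext fun (σ : Finset (IterV V k)) => by
    change Finset.image (idIter V k) σ = σ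
    rw [idIter_eq_id V k, Finset.image_id]

theorem heq_idIter_iff {V : Type u} [DecidableEq V] {j : ℕ} {f : IterV V j → IterV V j} :
    HEq f (idIter V j) ↔ f = id := by
  rw [heq_iff_eq, idIter_eq_id]

theorem SelCompPow.bary {V : Type u} [DecidableEq V] {A : Set (Finset V)}
    {l k : ℕ} {f : IterV V l → IterV V k} (h : SelCompPow A l k f) :
    SelCompPow A (l + 1) (k + 1) (fun σ => Finset.image f σ) := by
  induction h with
  | pow k j s hs => exact SelCompPow.pow k (j + 1) s hs
  | @comp l m k f g _ _ ihf ihg =>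
    have image_comp : (fun σ => Finset.image (f ∘ g) σ) =
        (fun σ => Finset.image f σ) ∘ (fun σ => Finset.image g σ) :=
      funext fun _ => Finset.image_image.symm
    exact image_comp ▸ ihf.comp ihg

def SelNormalForm {V : Type u} [DecidableEq V] (A : Set (Finset V)) (l k : ℕ)
    (f : IterV V l → IterV V k) : Prop :=
  (∃ j : ℕ, l = j ∧ k = j ∧ HEq f (idIter V j)) ∨ SelCompPow A l k f

namespace SelNormalForm

variable {V : Type u} [DecidableEq V] {A : Set (Finset V)}

theorem comp {l m k : ℕ} {f : IterV V m → IterV V k} {g : IterV V l → IterV V m}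
    (hf : SelNormalForm A m k f) (hg : SelNormalForm A l m g) :
    SelNormalForm A l k (f ∘ g) := by
  rcases hf with ⟨_, rfl, rfl, hf⟩ | hf <;> rcases hg with ⟨_, rfl, rfl, hg⟩ | hg
  · rw [heq_idIter_iff] at hf hg
    subst hf hg
    exact .inl ⟨_, rfl, rfl, heq_idIter_iff.2 rfl⟩
  · rw [heq_idIter_iff] at hf
    subst hf
    exact .inr hg
  · rw [heq_idIter_iff] at hg
    subst hg
    exact .inr hf
  · exact .inr (hf.comp hg)

theorem bary {l k : ℕ} {f : IterV V l → IterV V k} (hf : SelNormalForm A l k f) :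
    SelNormalForm A (l + 1) (k + 1) (fun σ => Finset.image f σ) := by
  rcases hf with ⟨_, rfl, rfl, hf⟩ | hf
  · rw [heq_idIter_iff] at hf
    subst hf
    exact .inl ⟨_, rfl, rfl, heq_idIter_iff.2 (funext fun σ => Finset.image_id)⟩
  · exact .inr hf.bary

end SelNormalForm

theorem Sel.selNormalForm {V : Type u} [DecidableEq V] {A : Set (Finset V)}
    {l k : ℕ} {f : IterV V l → IterV V k} (h : Sel A l k f) : SelNormalForm A l k f := by
  induction h with
  | elem k s hs => exact .inr (.pow k 0 s hs)
  | id => exact .inl ⟨0, rfl, rfl, .rfl⟩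
  | comp _ _ hf hg => exact hf.comp hg
  | bary _ hf => exact hf.bary

theorem sel_normal_form_general {V : Type u} [DecidableEq V] {A : Set (Finset V)}
    {l k : ℕ} {f : IterV V l → IterV V k} (h : Sel A l k f) :
    (∃ j : ℕ, l = j ∧ k = j ∧ HEq f (idIter V j)) ∨ SelCompPow A l k f :=
  h.selNormalForm

/-- Every map in `S(A)` is of the form `β^j(1_A)` for some `j ≥ 0`, or is a composition of
maps of the form `β^j(s)` where `s` is an elementary selection and `j ≥ 0`. -/
theorem sel_normal_form {V : Type u} [DecidableEq V] {A : Set (Finset V)}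
    (hA : IsComplex A) (hfin : A.Finite)
    {l k : ℕ} {f : IterV V l → IterV V k} (h : Sel A l k f) :
    (∃ j : ℕ, l = j ∧ k = j ∧ HEq f (idIter V j)) ∨ SelCompPow A l k f :=
  sel_normal_form_general h
end

section
/- Transitivity of domination: Let E be a category, let F and F′ be subcategories of E with the same objects as E, and let X be any subset of the morphisms of E. If F is dominating in F′ and F′ is dominating in X, then F is dominating in X. -/
open CategoryTheory

universe v u

/-- A class of morphisms of a category `E` (given with explicit source and target). -/
def MorProp (E : Type u) [Category.{v} E] : Type max u v :=
  ∀ a b : E, (a ⟶ b) → Prop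

/-- `F` is a subcategory of `E` on the same objects: it contains all identities and is
closed under composition. -/
def IsSubcategory {E : Type u} [Category.{v} E] (F : MorProp E) : Prop :=
  (∀ a : E, F a a (𝟙 a)) ∧
  ∀ (a b c : E) (f : a ⟶ b) (g : b ⟶ c), F a b f → F b c g → F a c (f ≫ g)

/-- `F` is dominating in `X`: (i) `g ∘ f ∈ X` for every `f ∈ F` and `g ∈ X` with
`codom f = dom g`; (ii) for every `g ∈ X` there is `h ∈ X` with `g ∘ h ∈ F`. -/
def Dominating {E : Type u} [Category.{v} E] (F X : MorProp E) : Prop :=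
  (∀ (a b c : E) (f : a ⟶ b) (g : b ⟶ c), F a b f → X b c g → X a c (f ≫ g)) ∧
  (∀ (b c : E) (g : b ⟶ c), X b c g → ∃ (a : E) (h : a ⟶ b), X a b h ∧ F a c (h ≫ g))

/-- Transitivity of domination: if `F` is dominating in the subcategory `F′` and `F′` is
dominating in a subset `X` of morphisms of `E`, then `F` is dominating in `X`. -/
theorem dominating_trans {E : Type u} [Category.{v} E]
    (F F' X : MorProp E)
    (hF : IsSubcategory F) (hF' : IsSubcategory F')
    (hFF' : Dominating F F') (hF'X : Dominating F' X) :
    Dominating F X := by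
  have hFsub : ∀ (a b : E) (f : a ⟶ b), F a b f → F' a b f := by
    intro a b f hf
    have := hFF'.1 a b b f (𝟙 b) hf (hF'.1 b)
    simpa using this
  constructor
  · intro a b c f g hf hg
    exact hF'X.1 a b c f g (hFsub a b f hf) hg
  · intro b c g hg
    obtain ⟨a, h, hhX, hhF'⟩ := hF'X.2 b c g hg
    obtain ⟨a', k, hkF', hkF⟩ := hFF'.2 a c (h ≫ g) hhF'
    refine ⟨a', k ≫ h, hF'X.1 a' a b k h hkF' hhX, ?_⟩
    simpa using hkF
end

section
/- If F is a subcategory of E with Ob(F)=Ob(E) and F is dominating in a set X of morphisms of E, then F is dominating in the closure of X under composition. Consequently, the domination closure [F] (the union of all subsets of Mor(E) in which F is dominating) is itself a subcategory of E, F ⊆ [F], and F is dominating in [F]. -/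
open CategoryTheory

universe v u

/-- The domination closure `[F]` of `F` in `E`: the union of all sets of morphisms of `E`
in which `F` is dominating. -/
def DomClosure {E : Type u} [Category.{v} E] (F : MorProp E) : MorProp E :=
  fun a b g => ∃ X : MorProp E, Dominating F X ∧ X a b g

/-- The closure of a set `X` of morphisms under composition. -/
inductive CompClosure {E : Type u} [Category.{v} E] (X : MorProp E) : ∀ a b : E, (a ⟶ b) → Prop
  | of {a b : E} (f : a ⟶ b) : X a b f → CompClosure X a b f
  | comp {a b c : E} (f : a ⟶ b) (g : b ⟶ c) :
      CompClosure X a b f → CompClosure X b c g → CompClosure X a c (f ≫ g)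

lemma compClosure_pre {E : Type u} [Category.{v} E] {F X : MorProp E}
    (hX : Dominating F X) :
    ∀ (a b c : E) (f : a ⟶ b) (g : b ⟶ c), F a b f → CompClosure X b c g →
      CompClosure X a c (f ≫ g) := by
  intro a b c f g hf hg
  induction hg generalizing a with
  | of g hg => exact CompClosure.of _ (hX.1 _ _ _ _ _ hf hg)
  | comp g1 g2 h1 h2 ih1 ih2 =>
    rw [← Category.assoc]
    exact CompClosure.comp _ _ (ih1 _ _ hf) h2

lemma compClosure_key {E : Type u} [Category.{v} E] {F X : MorProp E}
    (hF : IsSubcategory F) (hX : Dominating F X) :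
    ∀ {b c : E} {g : b ⟶ c}, CompClosure X b c g →
      ∀ (e : E) (f : e ⟶ b), F e b f →
        ∃ (d : E) (h : d ⟶ e), CompClosure X d e h ∧ F d c (h ≫ f ≫ g) := by
  intro b c g hg
  induction hg with
  | of g hg =>
    intro e f hf
    obtain ⟨d, h, hh, hfh⟩ := hX.2 _ _ _ (hX.1 _ _ _ _ _ hf hg)
    exact ⟨d, h, CompClosure.of _ hh, hfh⟩
  | comp g1 g2 h1 h2 ih1 ih2 =>
    intro e f hf
    obtain ⟨d1, k1, hk1, hfk1⟩ := ih1 e f hf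
    obtain ⟨d2, k2, hk2, hfk2⟩ := ih2 d1 (k1 ≫ f ≫ g1) hfk1
    refine ⟨d2, k2 ≫ k1, CompClosure.comp _ _ hk2 hk1, ?_⟩
    simpa using hfk2

lemma dominating_compClosure_aux {E : Type u} [Category.{v} E] {F X : MorProp E}
    (hF : IsSubcategory F) (hX : Dominating F X) :
    Dominating F (fun a b f => CompClosure X a b f) := by
  constructor
  · exact compClosure_pre hX
  · intro b c g hg
    obtain ⟨d, h, hh, hfh⟩ := compClosure_key hF hX hg b (𝟙 b) (hF.1 b)
    exact ⟨d, h, hh, by simpa using hfh⟩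

lemma dominating_self {E : Type u} [Category.{v} E] {F : MorProp E}
    (hF : IsSubcategory F) : Dominating F F := by
  refine ⟨fun a b c f g hf hg => hF.2 _ _ _ _ _ hf hg, fun b c g hg => ⟨b, 𝟙 b, hF.1 b, by simpa using hg⟩⟩

/-- If `F` is dominating in `X`, then `F` is dominating in the closure of `X` under
composition. Consequently, the domination closure `[F]` is a subcategory of `E`,
`F ⊆ [F]`, and `F` is dominating in `[F]`. -/
theorem dominating_compClosure {E : Type u} [Category.{v} E]
    (F X : MorProp E) (hF : IsSubcategory F) (hX : Dominating F X) :
    Dominating F (fun a b f => CompClosure X a b f) ∧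
    IsSubcategory (DomClosure F) ∧
    (∀ (a b : E) (f : a ⟶ b), F a b f → DomClosure F a b f) ∧
    Dominating F (DomClosure F) := by
  have hDomCl : Dominating F (DomClosure F) := by
    constructor
    · rintro a b c f g hf ⟨Y, hY, hg⟩
      exact ⟨Y, hY, hY.1 _ _ _ _ _ hf hg⟩
    · rintro b c g ⟨Y, hY, hg⟩
      obtain ⟨a, h, hh, hfh⟩ := hY.2 _ _ _ hg
      exact ⟨a, h, ⟨Y, hY, hh⟩, hfh⟩
  have hFsub : ∀ (a b : E) (f : a ⟶ b), F a b f → DomClosure F a b f :=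
    fun a b f hf => ⟨F, dominating_self hF, hf⟩
  refine ⟨dominating_compClosure_aux hF hX, ⟨fun a => hFsub _ _ _ (hF.1 a), ?_⟩, hFsub, hDomCl⟩
  rintro a b c f g ⟨Y, hY, hf⟩ ⟨Z, hZ, hg⟩
  have hU : Dominating F (fun a b f => Y a b f ∨ Z a b f) := by
    constructor
    · rintro a b c f g hf (hg | hg)
      · exact Or.inl (hY.1 _ _ _ _ _ hf hg)
      · exact Or.inr (hZ.1 _ _ _ _ _ hf hg)
    · rintro b c g (hg | hg)
      · obtain ⟨d, h, hh, hfh⟩ := hY.2 _ _ _ hg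
        exact ⟨d, h, Or.inl hh, hfh⟩
      · obtain ⟨d, h, hh, hfh⟩ := hZ.2 _ _ _ hg
        exact ⟨d, h, Or.inr hh, hfh⟩
  exact ⟨_, dominating_compClosure_aux hF hU,
    CompClosure.comp _ _ (CompClosure.of _ (Or.inl hf)) (CompClosure.of _ (Or.inr hg))⟩
end

section
/- Idempotence of domination closure: for a subcategory F of a category E with Ob(F)=Ob(E), the domination closure satisfies [[F]] = [F]. -/
open CategoryTheory

universe v u

section Aux

variable {E : Type u} [Category.{v} E] (F : MorProp E)

/-- `F ⊆ [F]` when `F` is a subcategory. -/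
lemma subset_domClosure (hF : IsSubcategory F) (a b : E) (g : a ⟶ b) (hg : F a b g) :
    DomClosure F a b g := by
  refine ⟨F, ⟨fun a b c f g hf hg => hF.2 a b c f g hf hg, ?_⟩, hg⟩
  intro b c g hg
  exact ⟨b, 𝟙 b, hF.1 b, by simpa using hg⟩

/-- `[F]` is closed under composition. -/
lemma domClosure_comp (hF : IsSubcategory F) (a b c : E) (f : a ⟶ b) (g : b ⟶ c)
    (hf : DomClosure F a b f) (hg : DomClosure F b c g) :
    DomClosure F a c (f ≫ g) := by
  obtain ⟨Y, hY, hfY⟩ := hf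
  obtain ⟨X, hX, hgX⟩ := hg
  -- the union of X and Y, dominated by F
  set U : MorProp E := fun a b k => X a b k ∨ Y a b k with hU
  have hUdom : Dominating F U := by
    constructor
    · rintro a b c f g hf (hg | hg)
      · exact Or.inl (hX.1 a b c f g hf hg)
      · exact Or.inr (hY.1 a b c f g hf hg)
    · rintro b c g (hg | hg)
      · obtain ⟨a, h, h1, h2⟩ := hX.2 b c g hg
        exact ⟨a, h, Or.inl h1, h2⟩
      · obtain ⟨a, h, h1, h2⟩ := hY.2 b c g hg
        exact ⟨a, h, Or.inr h1, h2⟩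
  -- enlarge U with composites
  set Z : MorProp E := fun a c k =>
    U a c k ∨ (∃ (b : E) (p : a ⟶ b) (q : b ⟶ c), U a b p ∧ U b c q ∧ k = p ≫ q)
      ∨ (∃ (b : E) (p : a ⟶ b) (q : b ⟶ c), U a b p ∧ F b c q ∧ k = p ≫ q) with hZ
  refine ⟨Z, ⟨?_, ?_⟩, Or.inr (Or.inl ⟨b, f, g, Or.inr hfY, Or.inl hgX, rfl⟩)⟩
  · rintro a b c f k hf (hk | ⟨d, p, q, hp, hq, rfl⟩ | ⟨d, p, q, hp, hq, rfl⟩)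
    · exact Or.inl (hUdom.1 a b c f k hf hk)
    · exact Or.inr (Or.inl ⟨d, f ≫ p, q, hUdom.1 _ _ _ _ _ hf hp, hq, by simp⟩)
    · exact Or.inr (Or.inr ⟨d, f ≫ p, q, hUdom.1 _ _ _ _ _ hf hp, hq, by simp⟩)
  · rintro b c k (hk | ⟨d, p, q, hp, hq, rfl⟩ | ⟨d, p, q, hp, hq, rfl⟩)
    · obtain ⟨a, h, h1, h2⟩ := hUdom.2 b c k hk
      exact ⟨a, h, Or.inl h1, h2⟩
    · -- k = p ≫ q with p, q ∈ U
      obtain ⟨a, h1, hh1, hh1F⟩ := hUdom.2 b d p hp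
      have hc : U a c ((h1 ≫ p) ≫ q) := hUdom.1 _ _ _ _ _ hh1F hq
      obtain ⟨a', h2, hh2, hh2F⟩ := hUdom.2 a c ((h1 ≫ p) ≫ q) hc
      refine ⟨a', h2 ≫ h1, Or.inr (Or.inl ⟨a, h2, h1, hh2, hh1, rfl⟩), ?_⟩
      · simpa using hh2F
    · -- k = p ≫ q with p ∈ U, q ∈ F
      obtain ⟨a, h1, hh1, hh1F⟩ := hUdom.2 b d p hp
      refine ⟨a, h1, Or.inl hh1, ?_⟩
      have := hF.2 _ _ _ _ _ hh1F hq
      simpa using this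

end Aux

/-- Idempotence of the domination closure: `[[F]] = [F]`. -/
theorem domClosure_idem {E : Type u} [Category.{v} E]
    (F : MorProp E) (hF : IsSubcategory F) :
    ∀ (a b : E) (g : a ⟶ b), DomClosure (DomClosure F) a b g ↔ DomClosure F a b g := by
  intro a b g
  constructor
  · rintro ⟨X, hX, hgX⟩
    -- W = [F] ∪ X is dominated by F
    set W : MorProp E := fun a b k => DomClosure F a b k ∨ X a b k with hW
    refine ⟨W, ⟨?_, ?_⟩, Or.inr hgX⟩
    · rintro a b c f k hf (hk | hk)
      · obtain ⟨Y, hY, hkY⟩ := hk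
        exact Or.inl ⟨Y, hY, hY.1 a b c f k hf hkY⟩
      · exact Or.inr (hX.1 a b c f k (subset_domClosure F hF a b f hf) hk)
    · rintro b c k (hk | hk)
      · obtain ⟨Y, hY, hkY⟩ := hk
        obtain ⟨a, h, h1, h2⟩ := hY.2 b c k hkY
        exact ⟨a, h, Or.inl ⟨Y, hY, h1⟩, h2⟩
      · obtain ⟨a, h, hhX, hhk⟩ := hX.2 b c k hk
        obtain ⟨Y, hY, hhkY⟩ := hhk
        obtain ⟨a', h', hh'Y, hh'F⟩ := hY.2 a c (h ≫ k) hhkY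
        refine ⟨a', h' ≫ h, Or.inr (hX.1 a' a b h' h ⟨Y, hY, hh'Y⟩ hhX), ?_⟩
        simpa using hh'F
  · intro hg
    -- [F] is dominating in [F]
    refine ⟨DomClosure F, ⟨?_, ?_⟩, hg⟩
    · intro a b c f k hf hk
      exact domClosure_comp F hF a b c f k hf hk
    · rintro b c k ⟨Y, hY, hkY⟩
      obtain ⟨a, h, h1, h2⟩ := hY.2 b c k hkY
      exact ⟨a, h, ⟨Y, hY, h1⟩, subset_domClosure F hF a c (h ≫ k) h2⟩
end

section
/- Let E be an essentially countable category and let F ⊆ F′ be subcategories of E with Ob(F)=Ob(E), such that F is dominating in F′. If F satisfies the projective amalgamation property (any two morphisms with common codomain can be completed to a commutative square), then F′ also satisfies the projective amalgamation property. -/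
open CategoryTheory

universe v u

/-- `E` is essentially countable: countably many objects up to isomorphism, and countable
hom-sets. -/
def EssentiallyCountable (E : Type u) [Category.{v} E] : Prop :=
  (∃ S : Set E, S.Countable ∧ ∀ a : E, ∃ s ∈ S, Nonempty (a ≅ s)) ∧
  ∀ a b : E, Countable (a ⟶ b)

/-- The projective amalgamation property for a class of morphisms. -/
def HasProjAmalgamation {E : Type u} [Category.{v} E] (F : MorProp E) : Prop :=
  ∀ (a b c : E) (e₁ : a ⟶ c) (e₂ : b ⟶ c), F a c e₁ → F b c e₂ →
    ∃ (d : E) (e₁' : d ⟶ a) (e₂' : d ⟶ b), F d a e₁' ∧ F d b e₂' ∧ e₁' ≫ e₁ = e₂' ≫ e₂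

/-- If `F ⊆ F'` are subcategories of an essentially countable category `E` on the same
objects, `F` is dominating in `F'`, and `F` has projective amalgamation, then so does `F'`. -/
theorem dominating_projAmalgamation {E : Type u} [Category.{v} E]
    (hE : EssentiallyCountable E)
    (F F' : MorProp E) (hF : IsSubcategory F) (hF' : IsSubcategory F')
    (hsub : ∀ (a b : E) (f : a ⟶ b), F a b f → F' a b f)
    (hdom : Dominating F F')
    (hamalg : HasProjAmalgamation F) :
    HasProjAmalgamation F' := by
  intro a b c e₁ e₂ he₁ he₂
  obtain ⟨a', h₁, hh₁, hf₁⟩ := hdom.2 a c e₁ he₁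
  obtain ⟨b', h₂, hh₂, hf₂⟩ := hdom.2 b c e₂ he₂
  obtain ⟨d, f₁, f₂, hf₁', hf₂', heq⟩ := hamalg a' b' c (h₁ ≫ e₁) (h₂ ≫ e₂) hf₁ hf₂
  exact ⟨d, f₁ ≫ h₁, f₂ ≫ h₂, hdom.1 _ _ _ _ _ hf₁' hh₁, hdom.1 _ _ _ _ _ hf₂' hh₂,
    by simpa using heq⟩
end

section
/- Let F be dominating in a subcategory F′ of an essentially countable category E (both with Ob = Ob(E)). Then every generic sequence for F is also a generic sequence for F′. -/
open CategoryTheory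

universe v u

/-- The composition `e_n ∘ ⋯ ∘ e_{n+m}` along a neat sequence. -/
def seg {E : Type u} [Category.{v} E] (o : ℕ → E) (e : ∀ n, o (n + 1) ⟶ o n) :
    ∀ n m : ℕ, o (n + m + 1) ⟶ o n
  | n, 0 => e n
  | n, m + 1 => e (n + m + 1) ≫ seg o e n m

/-- A neat sequence `(e_n)` (with `dom(e_n) = codom(e_{n+1})`) is generic for the class
`F`: it lies in `F`, is projectively universal, and has the projective extension
property. -/
def IsGenericSeq {E : Type u} [Category.{v} E] (F : MorProp E)
    (o : ℕ → E) (e : ∀ n, o (n + 1) ⟶ o n) : Prop :=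
  (∀ n, F (o (n + 1)) (o n) (e n)) ∧
  (∀ b : E, ∃ (n : ℕ) (g : o (n + 1) ⟶ b), F (o (n + 1)) b g) ∧
  (∀ (n : ℕ) (a : E) (g : a ⟶ o n), F a (o n) g →
    ∃ (m : ℕ) (g' : o (n + m + 1) ⟶ a), 0 < m ∧ F (o (n + m + 1)) a g' ∧
      seg o e n m = g' ≫ g)

/-- If `F` is dominating in the subcategory `F'` of an essentially countable category `E`,
then every generic sequence for `F` is also generic for `F'`. -/
theorem generic_of_dominating {E : Type u} [Category.{v} E]
    (hE : EssentiallyCountable E)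
    (F F' : MorProp E) (hF : IsSubcategory F) (hF' : IsSubcategory F')
    (hdom : Dominating F F')
    (o : ℕ → E) (e : ∀ n, o (n + 1) ⟶ o n)
    (hgen : IsGenericSeq F o e) :
    IsGenericSeq F' o e := by
  obtain ⟨hgen1, hgen2, hgen3⟩ := hgen
  have hsub : ∀ (a b : E) (f : a ⟶ b), F a b f → F' a b f := by
    intro a b f hf
    have := hdom.1 a b b f (𝟙 b) hf (hF'.1 b)
    simpa using this
  refine ⟨fun n => hsub _ _ _ (hgen1 n), ?_, ?_⟩
  · intro b
    obtain ⟨n, g, hg⟩ := hgen2 b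
    exact ⟨n, g, hsub _ _ _ hg⟩
  · intro n a g hg
    obtain ⟨a', h, hh, hhg⟩ := hdom.2 a (o n) g hg
    obtain ⟨m, g', hm, hg', hseg⟩ := hgen3 n a' (h ≫ g) hhg
    refine ⟨m, g' ≫ h, hm, hF'.2 _ _ _ g' h (hsub _ _ _ hg') hh, ?_⟩
    rw [hseg, Category.assoc]
end

section
/- Stellar subdivision followed by the corresponding weld is the identity: if A is a simplicial complex, σ ∈ A is a face, and a ∉ dom(A), then (σ,a)^{-1}((σ,a)A) = A, where (σ,a)A = (A ∖ st(σ,A)) ∪ ([a] ⋆ ∂[σ] ⋆ lk(σ,A)). -/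
/-- The full simplex `[σ]` on a finite set `σ`: all nonempty subsets of `σ`. -/
def fullSx {V : Type*} (σ : Finset V) : Set (Finset V) :=
  {τ | τ ⊆ σ ∧ τ.Nonempty}

/-- The boundary `∂[σ] = [σ] ∖ {σ}` of the full simplex on `σ`. -/
def bndSx {V : Type*} (σ : Finset V) : Set (Finset V) :=
  {τ | τ ⊆ σ ∧ τ ≠ σ ∧ τ.Nonempty}

/-- The join `A ⋆ B = A ∪ {α ∪ β : α ∈ A, β ∈ B} ∪ B` of two complexes. -/
def joinC {V : Type*} [DecidableEq V] (A B : Set (Finset V)) : Set (Finset V) :=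
  A ∪ B ∪ {γ | ∃ α ∈ A, ∃ β ∈ B, γ = α ∪ β}

/-- The domain (vertex set) of a complex: the union of its faces. -/
def domSet {V : Type*} (A : Set (Finset V)) : Set V :=
  {v | ∃ σ ∈ A, v ∈ σ}

/-- The open star `st(σ, A) = {τ ∈ A : σ ⊆ τ}`. -/
def starC {V : Type*} (σ : Finset V) (A : Set (Finset V)) : Set (Finset V) :=
  {τ ∈ A | σ ⊆ τ}

/-- The link `lk(σ, A) = {τ ∈ A : σ ∩ τ = ∅ and σ ∪ τ ∈ A}`. -/
def lkC {V : Type*} [DecidableEq V] (σ : Finset V) (A : Set (Finset V)) : Set (Finset V) :=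
  {τ ∈ A | Disjoint σ τ ∧ σ ∪ τ ∈ A}

/-- The stellar subdivision `(σ,a)A = (A ∖ st(σ,A)) ∪ ([a] ⋆ ∂[σ] ⋆ lk(σ,A))`
(in the essential case `σ ∈ A`, `a ∉ dom(A)`). -/
def subdivC {V : Type*} [DecidableEq V] (σ : Finset V) (a : V) (A : Set (Finset V)) :
    Set (Finset V) :=
  (A \ starC σ A) ∪ joinC ({({a} : Finset V)} : Set (Finset V)) (joinC (bndSx σ) (lkC σ A))

/-- Stellar subdivision followed by the corresponding weld is the identity: letting
`B = (σ,a)A`, the weld `(σ,a)^{-1}` applies essentially to `B` (`σ ∉ B`, `a ∈ dom(B)`,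
and `lk({a},B) = ∂[σ] ⋆ L` for some `L`), and `(B ∖ st({a},B)) ∪ ([σ] ⋆ L) = A`. -/
theorem subdiv_weld_id {V : Type*} [DecidableEq V] {A : Set (Finset V)}
    (hA : IsComplex A) {σ : Finset V} (hσ : σ ∈ A) {a : V} (ha : a ∉ domSet A) :
    σ ∉ subdivC σ a A ∧
    a ∈ domSet (subdivC σ a A) ∧
    ∃ L : Set (Finset V),
      lkC {a} (subdivC σ a A) = joinC (bndSx σ) L ∧
      (subdivC σ a A \ starC {a} (subdivC σ a A)) ∪ joinC (fullSx σ) L = A := by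

  obtain ⟨hne, hdown⟩ := hA
  have haA : ∀ τ ∈ A, a ∉ τ := fun τ hτ haτ => ha ⟨τ, hτ, haτ⟩
  have haσ : a ∉ σ := haA σ hσ
  have hσne : σ.Nonempty := hne σ hσ
  -- facts about members of K = ∂[σ] ⋆ lk(σ,A)
  have hKfacts : ∀ τ ∈ joinC (bndSx σ) (lkC σ A), τ ∈ A ∧ a ∉ τ ∧ ¬ σ ⊆ τ := by
    intro τ hτ
    rcases hτ with (hb | hl) | ⟨α, hα, β, hβ, rfl⟩
    · obtain ⟨hsub, hneq, hneτ⟩ := hb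
      refine ⟨hdown σ hσ τ hsub hneτ, fun h => haσ (hsub h), fun h => hneq (Finset.Subset.antisymm hsub h)⟩
    · obtain ⟨hτA, hd, _⟩ := hl
      refine ⟨hτA, haA τ hτA, fun h => ?_⟩
      exact hσne.ne_empty (disjoint_self.mp (hd.mono_right h))
    · obtain ⟨hαs, hαne, hαnem⟩ := hα
      obtain ⟨hβA, hd, hsβ⟩ := hβ
      refine ⟨hdown (σ ∪ β) hsβ (α ∪ β) (Finset.union_subset_union_left hαs)
        (hαnem.mono Finset.subset_union_left), ?_, ?_⟩
      · intro h
        rcases Finset.mem_union.mp h with h | h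
        · exact haσ (hαs h)
        · exact haA β hβA h
      · intro h
        apply hαne
        apply Finset.Subset.antisymm hαs
        intro x hx
        rcases Finset.mem_union.mp (h hx) with h' | h'
        · exact h'
        · exact absurd h' (Finset.disjoint_left.mp hd hx)
  have hK2B : joinC (bndSx σ) (lkC σ A) ⊆ subdivC σ a A := by
    intro τ hτ
    exact Or.inr (Or.inl (Or.inr hτ))
  -- characterize members of B containing a / not containing a
  have hBnoa : ∀ τ ∈ subdivC σ a A, a ∉ τ → τ ∈ A := by
    intro τ hτ hna
    rcases hτ with ⟨hτA, _⟩ | ((h1 | h2) | ⟨α, hα, β, hβ, rfl⟩)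
    · exact hτA
    · exact absurd (h1 ▸ Finset.mem_singleton_self a) hna
    · exact (hKfacts τ h2).1
    · rw [Set.mem_singleton_iff] at hα
      subst hα
      exact absurd (Finset.mem_union_left _ (Finset.mem_singleton_self a)) hna
  have hBne : ∀ τ ∈ subdivC σ a A, τ.Nonempty := by
    intro τ hτ
    rcases hτ with ⟨hτA, _⟩ | ((h1 | h2) | ⟨α, hα, β, hβ, rfl⟩)
    · exact hne τ hτA
    · exact h1 ▸ Finset.singleton_nonempty a
    · exact hne τ (hKfacts τ h2).1
    · rw [Set.mem_singleton_iff] at hα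
      subst hα
      exact (Finset.singleton_nonempty a).mono Finset.subset_union_left
  refine ⟨?_, ?_, lkC σ A, ?_, ?_⟩
  · -- σ ∉ B
    rintro (⟨_, hst⟩ | ((h1 | h2) | ⟨α, hα, β, hβ, heq⟩))
    · exact hst ⟨hσ, Finset.Subset.refl σ⟩
    · exact haσ (h1 ▸ Finset.mem_singleton_self a)
    · exact (hKfacts σ h2).2.2 (Finset.Subset.refl σ)
    · rw [Set.mem_singleton_iff] at hα
      subst hα
      exact haσ (heq ▸ Finset.mem_union_left _ (Finset.mem_singleton_self a))
  · -- a ∈ dom B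
    exact ⟨{a}, Or.inr (Or.inl (Or.inl rfl)), Finset.mem_singleton_self a⟩
  · -- lk({a}, B) = ∂[σ] ⋆ lk(σ,A)
    ext τ
    constructor
    · rintro ⟨hτB, hd, hins⟩
      have hna : a ∉ τ := Finset.disjoint_singleton_left.mp hd
      rcases hins with ⟨hinA, _⟩ | ((h1 | h2) | ⟨α, hα, β, hβ, heq⟩)
      · exact absurd (Finset.mem_union_left _ (Finset.mem_singleton_self a)) (haA _ hinA)
      · -- {a} ∪ τ = {a} forces τ = ∅
        exfalso
        have hτsub : τ ⊆ ({a} : Finset V) := h1 ▸ Finset.subset_union_right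
        rcases Finset.subset_singleton_iff.mp hτsub with hτe | hτe
        · exact (hBne τ hτB).ne_empty hτe
        · exact hna (hτe ▸ Finset.mem_singleton_self a)
      · exact absurd (Finset.mem_union_left _ (Finset.mem_singleton_self a)) (hKfacts _ h2).2.1
      · rw [Set.mem_singleton_iff] at hα
        subst hα
        have hτβ : τ = β := by
          have hnaβ : a ∉ β := (hKfacts β hβ).2.1
          ext x
          constructor
          · intro hx
            have : x ∈ ({a} : Finset V) ∪ β := heq ▸ Finset.mem_union_right _ hx
            rcases Finset.mem_union.mp this with h' | h'
            · exact absurd (Finset.mem_singleton.mp h' ▸ hx) hna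
            · exact h'
          · intro hx
            have : x ∈ ({a} : Finset V) ∪ τ := heq.symm ▸ Finset.mem_union_right _ hx
            rcases Finset.mem_union.mp this with h' | h'
            · exact absurd (Finset.mem_singleton.mp h' ▸ hx) hnaβ
            · exact h'
        exact hτβ ▸ hβ
    · intro hτ
      obtain ⟨_, hna, _⟩ := hKfacts τ hτ
      refine ⟨hK2B hτ, Finset.disjoint_singleton_left.mpr hna, ?_⟩
      exact Or.inr (Or.inr ⟨{a}, rfl, τ, hτ, rfl⟩)
  · -- (B ∖ st({a},B)) ∪ ([σ] ⋆ lk(σ,A)) = A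
    ext τ
    constructor
    · rintro (⟨hτB, hst⟩ | hτJ)
      · have hna : a ∉ τ := fun h => hst ⟨hτB, Finset.singleton_subset_iff.mpr h⟩
        exact hBnoa τ hτB hna
      · rcases hτJ with (⟨hsub, hnem⟩ | ⟨hτA, _⟩) | ⟨α, ⟨hαs, hαne⟩, β, ⟨hβA, _, hsβ⟩, rfl⟩
        · exact hdown σ hσ τ hsub hnem
        · exact hτA
        · exact hdown (σ ∪ β) hsβ (α ∪ β) (Finset.union_subset_union_left hαs)
            (hαne.mono Finset.subset_union_left)
    · intro hτA
      by_cases hst : σ ⊆ τ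
      · right
        by_cases hts : τ ⊆ σ
        · exact Or.inl (Or.inl ⟨hts, hne τ hτA⟩)
        · have hβne : (τ \ σ).Nonempty := by
            rw [Finset.sdiff_nonempty]
            exact hts
          have hβA : τ \ σ ∈ A := hdown τ hτA _ (Finset.sdiff_subset) hβne
          have heq : σ ∪ τ \ σ = τ := Finset.union_sdiff_of_subset hst
          exact Or.inr ⟨σ, ⟨Finset.Subset.refl σ, hσne⟩, τ \ σ,
            ⟨hβA, Finset.disjoint_sdiff, by rw [heq]; exact hτA⟩, heq.symm⟩
      · left
        refine ⟨Or.inl ⟨hτA, fun h => hst h.2⟩, ?_⟩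
        rintro ⟨_, hsub⟩
        exact haA τ hτA (hsub (Finset.mem_singleton_self a))
end

section
/- Let C be a simplicial complex and σ ∈ C a face. The dual complex D(σ,C) := { {σ₀ ⊆ ⋯ ⊆ σ_k} : σ ⊆ σ₀, each σ_i ∈ C } is a subcomplex of the barycentric subdivision βC, and it is isomorphic to the cone [v] ⋆ β(lk(σ,C)) for a fresh vertex v, via the map sending the vertex σ of D(σ,C) to v and the vertex τ (with σ ⊊ τ) to the face τ ∖ σ of lk(σ,C). -/
/-- The dual `D(σ,C)` to a face `σ` in `C`: the chains of faces of `C` all of whose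
members contain `σ` (equivalently, whose smallest member contains `σ`). -/
def dualC {V : Type*} (σ : Finset V) (C : Set (Finset V)) : Set (Finset (Finset V)) :=
  {S ∈ bary C | ∀ τ ∈ S, σ ⊆ τ}

/-- `D(σ,C)` is a subcomplex of `βC`, and the vertex map `τ ↦ τ ∖ σ` (sending the vertex
`σ` to the fresh cone vertex `∅`) induces a simplicial isomorphism of `D(σ,C)` onto the
cone `[v] ⋆ β(lk(σ,C))`. -/
theorem dual_iso_cone {V : Type*} [DecidableEq V] {C : Set (Finset V)}
    (hC : IsComplex C) {σ : Finset V} (hσ : σ ∈ C) :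
    dualC σ C ⊆ bary C ∧
    IsComplex (dualC σ C) ∧
    Set.BijOn (fun S : Finset (Finset V) => S.image (fun τ => τ \ σ))
      (dualC σ C)
      (joinC ({({(∅ : Finset V)} : Finset (Finset V))} : Set (Finset (Finset V)))
        (bary (lkC σ C))) ∧
    Set.InjOn (fun τ : Finset V => τ \ σ) {τ | ∃ S ∈ dualC σ C, τ ∈ S} := by
  classical
  set f : Finset V → Finset V := fun τ => τ \ σ with hf
  set g : Finset V → Finset V := fun β => σ ∪ β with hg
  have key : ∀ τ : Finset V, σ ⊆ τ → g (f τ) = τ := by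
    intro τ hτ
    simp only [hf, hg]
    exact Finset.union_sdiff_of_subset hτ
  have keyg : ∀ β : Finset V, Disjoint σ β → f (g β) = β := by
    intro β hβ
    simp only [hf, hg]
    exact Finset.union_sdiff_cancel_left hβ
  -- membership of sdiffs in the link
  have flk : ∀ τ ∈ C, σ ⊆ τ → τ ≠ σ → f τ ∈ lkC σ C := by
    intro τ hτC hστ hne
    have hnon : (f τ).Nonempty := by
      rw [Finset.sdiff_nonempty]
      intro h
      exact hne (Finset.Subset.antisymm h hστ)
    refine ⟨hC.2 τ hτC _ Finset.sdiff_subset hnon, Finset.disjoint_sdiff, ?_⟩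
    rw [show σ ∪ f τ = τ from key τ hστ] at *
    exact hτC
  -- the "erase and project" part of the image lies in β(lk)
  have himT : ∀ S ∈ dualC σ C, (S.erase σ).Nonempty →
      (S.erase σ).image f ∈ bary (lkC σ C) := by
    rintro S ⟨⟨hne, hsub, hch⟩, hall⟩ hEne
    refine ⟨hEne.image f, ?_, ?_⟩
    · rintro β hβ
      simp only [Finset.coe_image, Set.mem_image, Finset.mem_coe] at hβ
      obtain ⟨τ, hτ, rfl⟩ := hβ
      have hτS := Finset.mem_of_mem_erase hτ
      exact flk τ (hsub hτS) (hall τ hτS) (Finset.ne_of_mem_erase hτ)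
    · rintro β hβ β' hβ' hne'
      simp only [Finset.coe_image, Set.mem_image, Finset.mem_coe] at hβ hβ'
      obtain ⟨τ, hτ, rfl⟩ := hβ
      obtain ⟨τ', hτ', rfl⟩ := hβ'
      have := hch (Finset.mem_coe.2 (Finset.mem_of_mem_erase hτ))
        (Finset.mem_coe.2 (Finset.mem_of_mem_erase hτ')) ?_
      · rcases this with h | h
        · exact Or.inl (Finset.sdiff_subset_sdiff h (le_refl σ))
        · exact Or.inr (Finset.sdiff_subset_sdiff h (le_refl σ))
      · rintro rfl; exact hne' rfl
  -- lifting a chain in the link back up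
  have hlift : ∀ T ∈ bary (lkC σ C), T.image g ∈ dualC σ C ∧ (T.image g).image f = T := by
    rintro T ⟨hTne, hTsub, hTch⟩
    have hdisj : ∀ β ∈ T, Disjoint σ β := fun β hβ => (hTsub hβ).2.1
    constructor
    · refine ⟨⟨hTne.image g, ?_, ?_⟩, ?_⟩
      · rintro τ hτ
        simp only [Finset.coe_image, Set.mem_image, Finset.mem_coe] at hτ
        obtain ⟨β, hβ, rfl⟩ := hτ
        exact (hTsub hβ).2.2
      · rintro τ hτ τ' hτ' hne'
        simp only [Finset.coe_image, Set.mem_image, Finset.mem_coe] at hτ hτ'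
        obtain ⟨β, hβ, rfl⟩ := hτ
        obtain ⟨β', hβ', rfl⟩ := hτ'
        have := hTch (Finset.mem_coe.2 hβ) (Finset.mem_coe.2 hβ') ?_
        · rcases this with h | h
          · exact Or.inl (Finset.union_subset_union_right h)
          · exact Or.inr (Finset.union_subset_union_right h)
        · rintro rfl; exact hne' rfl
      · intro τ hτ
        simp only [Finset.mem_image] at hτ
        obtain ⟨β, hβ, rfl⟩ := hτ
        exact Finset.subset_union_left
    · rw [Finset.image_image]
      refine Finset.image_congr (fun β hβ => keyg β (hdisj β hβ)) |>.trans (Finset.image_id)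
  -- main result
  have hsingleton : ({σ} : Finset (Finset V)) ∈ dualC σ C := by
    refine ⟨⟨Finset.singleton_nonempty σ, ?_, ?_⟩, ?_⟩
    · intro τ hτ
      simp only [Finset.coe_singleton, Set.mem_singleton_iff] at hτ
      subst hτ; exact hσ
    · simp only [Finset.coe_singleton]
      exact Set.subsingleton_singleton.isChain
    · intro τ hτ
      rw [Finset.mem_singleton] at hτ
      exact le_of_eq hτ.symm
  refine ⟨fun S hS => hS.1, ?_, ⟨?_, ?_, ?_⟩, ?_⟩
  · -- IsComplex (dualC σ C)
    constructor
    · rintro S ⟨⟨hne, _, _⟩, _⟩; exact hne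
    · rintro S ⟨⟨hne, hsub, hch⟩, hall⟩ T hTS hTne
      refine ⟨⟨hTne, fun x hx => hsub (hTS hx), hch.mono (Finset.coe_subset.2 hTS)⟩,
        fun τ hτ => hall τ (hTS hτ)⟩
  · -- MapsTo
    intro S hS
    obtain ⟨⟨hne, hsub, hch⟩, hall⟩ := hS
    by_cases hσS : σ ∈ S
    · have hSdecomp : S = insert σ (S.erase σ) := (Finset.insert_erase hσS).symm
      by_cases hE : (S.erase σ).Nonempty
      · refine Or.inr ⟨{(∅ : Finset V)}, rfl, (S.erase σ).image f, himT S ⟨⟨hne, hsub, hch⟩, hall⟩ hE, ?_⟩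
        show Finset.image f S = _
        conv_lhs => rw [hSdecomp]
        rw [Finset.image_insert]
        have : f σ = ∅ := by simp [hf]
        rw [this, Finset.insert_eq]
      · have : S = {σ} := by
          rw [Finset.not_nonempty_iff_eq_empty] at hE
          rw [hSdecomp, hE]; rfl
        left; left
        rw [this]
        simp [hf]
    · have hE : (S.erase σ).Nonempty := by
        rwa [Finset.erase_eq_of_notMem hσS]
      left; right
      have := himT S ⟨⟨hne, hsub, hch⟩, hall⟩ hE
      rwa [Finset.erase_eq_of_notMem hσS] at this
  · -- InjOn
    intro S hS T hT h
    have h' : S.image f = T.image f := h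
    have hrec : ∀ U ∈ dualC σ C, (U.image f).image g = U := by
      rintro U ⟨⟨_, _, _⟩, hall⟩
      rw [Finset.image_image]
      exact Finset.image_congr (fun τ hτ => key τ (hall τ hτ)) |>.trans Finset.image_id
    calc S = (S.image f).image g := (hrec S hS).symm
      _ = (T.image f).image g := by rw [h']
      _ = T := hrec T hT
  · -- SurjOn
    rintro γ ((rfl | hγ) | ⟨α, hα, T, hT, rfl⟩)
    · refine ⟨{σ}, hsingleton, ?_⟩
      simp [hf]
    · obtain ⟨hmem, himg⟩ := hlift γ hγ
      exact ⟨γ.image g, hmem, himg⟩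
    · simp only [Set.mem_singleton_iff] at hα
      subst hα
      obtain ⟨hmem, himg⟩ := hlift T hT
      refine ⟨insert σ (T.image g), ?_, ?_⟩
      · obtain ⟨⟨hne, hsub, hch⟩, hall⟩ := hmem
        refine ⟨⟨Finset.insert_nonempty _ _, ?_, ?_⟩, ?_⟩
        · intro τ hτ
          simp only [Finset.coe_insert, Set.mem_insert_iff, Finset.mem_coe] at hτ
          rcases hτ with rfl | hτ
          · exact hσ
          · exact hsub hτ
        · rintro τ hτ τ' hτ' hne'
          simp only [Finset.coe_insert, Set.mem_insert_iff, Finset.mem_coe] at hτ hτ'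
          rcases hτ with rfl | hτ
          · rcases hτ' with rfl | hτ'
            · exact absurd rfl hne'
            · exact Or.inl (hall τ' hτ')
          · rcases hτ' with rfl | hτ'
            · exact Or.inr (hall τ hτ)
            · exact hch (Finset.mem_coe.2 hτ) (Finset.mem_coe.2 hτ') hne'
        · intro τ hτ
          rcases Finset.mem_insert.1 hτ with rfl | hτ
          · exact subset_rfl
          · exact hall τ hτ
      · show Finset.image f (insert σ (T.image g)) = _
        rw [Finset.image_insert, himg]
        have : f σ = ∅ := by simp [hf]
        rw [this, Finset.insert_eq]
  · -- InjOn on vertices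
    rintro τ ⟨S, hS, hτ⟩ τ' ⟨S', hS', hτ'⟩ h
    have h1 := hS.2 τ hτ
    have h2 := hS'.2 τ' hτ'
    calc τ = g (f τ) := (key τ h1).symm
      _ = g (f τ') := by rw [h]
      _ = τ' := key τ' h2
end

section
/- For a simplicial map f : B → A and a face σ of A, the dual complex with respect to f, D(σ,f) := (βf)^{-1}_*(D(σ,A)) = { {τ₀ ⊆ ⋯ ⊆ τ_k} : τ_i ∈ B, σ ⊆ f_*(τ₀) }, is a subcomplex of βB, and it collapses to the subcomplex (βf)^{-1}_*({σ}) of βB (i.e., to the chains all of whose members map onto σ under f_*). -/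
/-- An elementary collapse: remove a free face `ρ` together with the unique face `τ`
properly containing it. -/
def ElemCollapse {X : Type*} (C C' : Set (Finset X)) : Prop :=
  ∃ ρ τ : Finset X, ρ ∈ C ∧ τ ∈ C ∧ ρ ⊂ τ ∧ (∀ γ ∈ C, ρ ⊂ γ → γ = τ) ∧
    C' = C \ {ρ, τ}

/-- `C` collapses to `D`: `D` is reached from `C` by a finite sequence of elementary
collapses. -/
def Collapses {X : Type*} (C D : Set (Finset X)) : Prop :=
  Relation.ReflTransGen ElemCollapse C D

/-- The dual `D(σ,f)` to `σ` with respect to a simplicial map `f : B → A`: the chains of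
faces of `B` all of whose members `τ` satisfy `σ ⊆ f_*(τ)` (equivalently, whose smallest
member does). -/
def dualMap {V W : Type*} [DecidableEq W] (σ : Finset W) (f : V → W)
    (B : Set (Finset V)) : Set (Finset (Finset V)) :=
  {S ∈ bary B | ∀ τ ∈ S, σ ⊆ τ.image f}

/-- `(βf)^{-1}(σ)`: the chains of faces of `B` all of whose members map onto `σ`. -/
def dualMapPt {V W : Type*} [DecidableEq W] (σ : Finset W) (f : V → W)
    (B : Set (Finset V)) : Set (Finset (Finset V)) :=
  {S ∈ bary B | ∀ τ ∈ S, τ.image f = σ}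

open Finset

section Collapse

variable {X : Type*} {K K' L : Set (Finset X)}

theorem ElemCollapse.ssubset (h : ElemCollapse K K') : K' ⊂ K := by
  obtain ⟨ρ, τ, hρ, -, -, -, rfl⟩ := h
  exact ⟨Set.sdiff_subset, fun h => (h hρ).2 (.inl rfl)⟩

theorem collapses_of_invariant (P : Set (Finset X) → Prop)
    (hstep : ∀ K, P K → K ≠ L → ∃ K', ElemCollapse K K' ∧ P K')
    (hK : P K) (hfin : K.Finite) : Collapses K L := by
  induction h : K.ncard using Nat.strong_induction_on generalizing K with
  | _ n ih =>
    by_cases hKL : K = L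
    · exact hKL ▸ .refl
    obtain ⟨K', hKK', hK'⟩ := hstep K hK hKL
    exact .head hKK' (ih _ (h ▸ Set.ncard_lt_ncard hKK'.ssubset hfin) hK'
      (hfin.subset hKK'.ssubset.subset) rfl)

end Collapse

theorem bary_finite {V : Type*} {B : Set (Finset V)} (hB : B.Finite) : (bary B).Finite :=
  (hB.finite_subsets.preimage Finset.coe_injective.injOn).subset fun _ hS => hS.2.1

theorem IsChain.exists_least {V : Type*} {s : Finset (Finset V)}
    (hc : IsChain (· ⊆ ·) (s : Set (Finset V))) (hs : s.Nonempty) :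
    ∃ m ∈ s, ∀ x ∈ s, m ⊆ x := by
  obtain ⟨m, hm, hmin⟩ := s.exists_min_image card hs
  refine ⟨m, hm, fun x hx => ?_⟩
  rcases eq_or_ne m x with rfl | hne
  · exact subset_rfl
  · exact (hc hm hx hne).resolve_right fun hxm =>
      hne (eq_of_subset_of_card_le hxm (hmin x hx)).symm

section Dual

variable {V W : Type*} [DecidableEq W] {σ : Finset W} {f : V → W}
  {B : Set (Finset V)} {S R : Finset (Finset V)}

theorem dualMap_isComplex : IsComplex (dualMap σ f B) :=
  ⟨fun _ hS => hS.1.1, fun _ hS _ hTS hT =>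
    ⟨⟨hT, (coe_subset.2 hTS).trans hS.1.2.1, hS.1.2.2.mono (coe_subset.2 hTS)⟩,
      fun τ hτ => hS.2 τ (hTS hτ)⟩⟩

theorem dualMapPt_subset_dualMap : dualMapPt σ f B ⊆ dualMap σ f B :=
  fun _ hS => ⟨hS.1, fun τ hτ => (hS.2 τ hτ).ge⟩

variable (σ f) in
def offFaces (S : Finset (Finset V)) : Finset (Finset V) :=
  S.filter fun τ => τ.image f ≠ σ

-- Junk unless `offFaces σ f S` has a least member, as it does for `S ∈ D(σ,f) \ (βf)⁻¹(σ)`.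
variable (σ f) in
noncomputable def minOff (S : Finset (Finset V)) : Finset V :=
  Classical.epsilon fun m => m ∈ offFaces σ f S ∧ ∀ x ∈ offFaces σ f S, m ⊆ x

variable (σ f) in
noncomputable def core (S : Finset (Finset V)) : Finset V :=
  (minOff σ f S).filter fun v => f v ∈ σ

theorem offFaces_mono (h : S ⊆ R) : offFaces σ f S ⊆ offFaces σ f R :=
  filter_subset_filter _ h

theorem offFaces_nonempty (hS : S ∈ dualMap σ f B) (hSL : S ∉ dualMapPt σ f B) :
    (offFaces σ f S).Nonempty := by
  by_contra h
  refine hSL ⟨hS.1, fun τ hτ => ?_⟩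
  by_contra hτσ
  exact h ⟨τ, mem_filter.2 ⟨hτ, hτσ⟩⟩

theorem notMem_dualMapPt_of_offFaces_nonempty (h : (offFaces σ f S).Nonempty) :
    S ∉ dualMapPt σ f B := fun hS => by
  obtain ⟨τ, hτ⟩ := h
  exact (mem_filter.1 hτ).2 (hS.2 τ (mem_filter.1 hτ).1)

theorem minOff_congr {S' : Finset (Finset V)} (h : offFaces σ f S = offFaces σ f S') :
    minOff σ f S = minOff σ f S' := by
  rw [minOff, minOff, h]

theorem core_congr {S' : Finset (Finset V)} (h : offFaces σ f S = offFaces σ f S') :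
    core σ f S = core σ f S' := by
  rw [core, core, minOff_congr h]

theorem minOff_spec (hS : S ∈ dualMap σ f B) (hSL : S ∉ dualMapPt σ f B) :
    minOff σ f S ∈ offFaces σ f S ∧ ∀ x ∈ offFaces σ f S, minOff σ f S ⊆ x :=
  Classical.epsilon_spec <| IsChain.exists_least
    (hS.1.2.2.mono (coe_subset.2 (filter_subset _ _))) (offFaces_nonempty hS hSL)

theorem minOff_mem (hS : S ∈ dualMap σ f B) (hSL : S ∉ dualMapPt σ f B) :
    minOff σ f S ∈ S :=
  (mem_filter.1 (minOff_spec hS hSL).1).1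

theorem image_minOff_ne (hS : S ∈ dualMap σ f B) (hSL : S ∉ dualMapPt σ f B) :
    (minOff σ f S).image f ≠ σ :=
  (mem_filter.1 (minOff_spec hS hSL).1).2

theorem image_core (hS : S ∈ dualMap σ f B) (hSL : S ∉ dualMapPt σ f B) :
    (core σ f S).image f = σ := by
  refine Subset.antisymm (fun w hw => ?_) fun w hw => ?_
  · obtain ⟨v, hv, rfl⟩ := mem_image.1 hw
    exact (mem_filter.1 hv).2
  · obtain ⟨v, hv, rfl⟩ := mem_image.1 (hS.2 _ (minOff_mem hS hSL) hw)
    exact mem_image_of_mem f (mem_filter.2 ⟨hv, hw⟩)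

theorem core_ssubset_minOff (hS : S ∈ dualMap σ f B) (hSL : S ∉ dualMapPt σ f B) :
    core σ f S ⊂ minOff σ f S :=
  ssubset_of_subset_of_ne (filter_subset _ _) fun h =>
    image_minOff_ne hS hSL (h ▸ image_core hS hSL)

theorem core_comparable (hS : S ∈ dualMap σ f B) (hSL : S ∉ dualMapPt σ f B) {τ : Finset V}
    (hτ : τ ∈ S) : τ ⊆ core σ f S ∨ core σ f S ⊆ τ := by
  have hm := minOff_mem hS hSL
  by_cases hτσ : τ.image f = σ
  · have hτm : τ ⊆ minOff σ f S := by
      rcases eq_or_ne τ (minOff σ f S) with h | h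
      · exact h.le
      refine (hS.1.2.2 hτ hm h).resolve_right fun hmτ => image_minOff_ne hS hSL ?_
      exact Subset.antisymm ((image_subset_image hmτ).trans hτσ.le) (hS.2 _ hm)
    exact .inl fun v hv => mem_filter.2 ⟨hτm hv, hτσ ▸ mem_image_of_mem f hv⟩
  · exact .inr ((core_ssubset_minOff hS hSL).subset.trans
      ((minOff_spec hS hSL).2 τ (mem_filter.2 ⟨hτ, hτσ⟩)))

theorem core_mem (hB : IsComplex B) (hσ : σ.Nonempty) (hS : S ∈ dualMap σ f B)
    (hSL : S ∉ dualMapPt σ f B) : core σ f S ∈ B :=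
  hB.2 _ (hS.1.2.1 (minOff_mem hS hSL)) _ (core_ssubset_minOff hS hSL).subset
    (image_nonempty.1 (image_core hS hSL ▸ hσ))

variable [DecidableEq V]

variable (σ f) in
noncomputable def partner (S : Finset (Finset V)) : Finset (Finset V) :=
  if core σ f S ∈ S then S.erase (core σ f S) else insert (core σ f S) S

theorem offFaces_erase_core (hS : S ∈ dualMap σ f B) (hSL : S ∉ dualMapPt σ f B) :
    offFaces σ f (S.erase (core σ f S)) = offFaces σ f S := by
  rw [offFaces, filter_erase, erase_eq_of_notMem (by simp [image_core hS hSL])]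
  rfl

theorem offFaces_insert_core (hS : S ∈ dualMap σ f B) (hSL : S ∉ dualMapPt σ f B) :
    offFaces σ f (insert (core σ f S) S) = offFaces σ f S := by
  rw [offFaces, filter_insert, if_neg (by simp [image_core hS hSL])]
  rfl

theorem offFaces_partner (hS : S ∈ dualMap σ f B) (hSL : S ∉ dualMapPt σ f B) :
    offFaces σ f (partner σ f S) = offFaces σ f S := by
  unfold partner
  split_ifs
  exacts [offFaces_erase_core hS hSL, offFaces_insert_core hS hSL]

theorem core_partner (hS : S ∈ dualMap σ f B) (hSL : S ∉ dualMapPt σ f B) :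
    core σ f (partner σ f S) = core σ f S :=
  core_congr (offFaces_partner hS hSL)

theorem partner_partner (hS : S ∈ dualMap σ f B) (hSL : S ∉ dualMapPt σ f B) :
    partner σ f (partner σ f S) = S := by
  conv_lhs => rw [partner, core_partner hS hSL]
  by_cases hc : core σ f S ∈ S
  · rw [partner, if_pos hc, if_neg (notMem_erase _ _), insert_erase hc]
  · rw [partner, if_neg hc, if_pos (mem_insert_self _ _), erase_insert hc]

theorem partner_mem_dualMap (hB : IsComplex B) (hσ : σ.Nonempty) (hS : S ∈ dualMap σ f B)
    (hSL : S ∉ dualMapPt σ f B) : partner σ f S ∈ dualMap σ f B := by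
  unfold partner
  split_ifs
  · exact dualMap_isComplex.2 S hS _ (erase_subset _ _)
      ⟨_, mem_erase.2 ⟨(core_ssubset_minOff hS hSL).ne', minOff_mem hS hSL⟩⟩
  · refine ⟨⟨insert_nonempty _ _, ?_, ?_⟩, forall_mem_insert _ _ _ |>.2
      ⟨(image_core hS hSL).ge, hS.2⟩⟩
    · rw [coe_insert]
      exact Set.insert_subset (core_mem hB hσ hS hSL) hS.1.2.1
    · rw [coe_insert]
      exact hS.1.2.2.insert fun τ hτ _ => (core_comparable hS hSL hτ).symm

theorem partner_notMem_dualMapPt (hS : S ∈ dualMap σ f B) (hSL : S ∉ dualMapPt σ f B) :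
    partner σ f S ∉ dualMapPt σ f B :=
  notMem_dualMapPt_of_offFaces_nonempty (offFaces_partner hS hSL ▸ offFaces_nonempty hS hSL)

variable (σ f B) in
def PartnerClosed (K : Set (Finset (Finset V))) : Prop :=
  dualMapPt σ f B ⊆ K ∧ K ⊆ dualMap σ f B ∧
    ∀ R ∈ K, R ∉ dualMapPt σ f B → partner σ f R ∈ K

theorem partnerClosed_dualMap (hB : IsComplex B) (hσ : σ.Nonempty) :
    PartnerClosed σ f B (dualMap σ f B) :=
  ⟨dualMapPt_subset_dualMap, subset_rfl, fun _ hR hRL => partner_mem_dualMap hB hσ hR hRL⟩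

variable (σ f B) in
def lowerChains (K : Set (Finset (Finset V))) : Set (Finset (Finset V)) :=
  {S | S ∈ K ∧ S ∉ dualMapPt σ f B ∧ core σ f S ∉ S}

variable (σ f) in
/-- Pairs are collapsed in decreasing order of the rank of their lower chain. -/
noncomputable def pairRank (S : Finset (Finset V)) : ℕ ×ₗ ℕᵒᵈ :=
  toLex (S.card, OrderDual.toDual (minOff σ f S).card)

theorem erase_core_mem_lowerChains {K : Set (Finset (Finset V))} (hK : PartnerClosed σ f B K)
    (hR : R ∈ K) (hRL : R ∉ dualMapPt σ f B) : R.erase (core σ f R) ∈ lowerChains σ f B K := by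
  have hRD := hK.2.1 hR
  have hoff := offFaces_erase_core hRD hRL
  refine ⟨?_, notMem_dualMapPt_of_offFaces_nonempty (hoff ▸ offFaces_nonempty hRD hRL),
    by rw [core_congr hoff]; exact notMem_erase _ _⟩
  by_cases hc : core σ f R ∈ R
  · simpa only [partner, if_pos hc] using hK.2.2 R hR hRL
  · rwa [erase_eq_of_notMem hc]

theorem eq_insert_core_of_ssubset {K : Set (Finset (Finset V))} (hK : PartnerClosed σ f B K)
    (hS : S ∈ lowerChains σ f B K)
    (hmax : ∀ T ∈ lowerChains σ f B K, pairRank σ f T ≤ pairRank σ f S)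
    (hR : R ∈ K) (hSR : S ⊂ R) : R = insert (core σ f S) S := by
  obtain ⟨hSK, hSL, hcS⟩ := hS
  have hSD := hK.2.1 hSK
  have hRD := hK.2.1 hR
  have hRL : R ∉ dualMapPt σ f B := notMem_dualMapPt_of_offFaces_nonempty
    ((offFaces_nonempty hSD hSL).mono (offFaces_mono hSR.subset))
  set T := R.erase (core σ f R)
  have hRT : R.card ≤ T.card + 1 := by
    have : R.card - 1 ≤ T.card := pred_card_le_card_erase
    omega
  have hSR' : S.card < R.card := card_lt_card hSR
  obtain ⟨hTS, hmS⟩ : T.card = S.card ∧ (minOff σ f S).card ≤ (minOff σ f T).card := by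
    rcases Prod.Lex.toLex_le_toLex.1 (hmax T (erase_core_mem_lowerChains hK hR hRL)) with h | h
    · omega
    · exact ⟨h.1, OrderDual.toDual_le_toDual.1 h.2⟩
  have hm : minOff σ f R = minOff σ f S :=
    eq_of_subset_of_card_le ((minOff_spec hRD hRL).2 _
      (offFaces_mono hSR.subset (minOff_spec hSD hSL).1))
      (minOff_congr (offFaces_erase_core hRD hRL) ▸ hmS)
  have hc : core σ f R = core σ f S := by rw [core, core, hm]
  have hcR : core σ f S ∈ R := by
    by_contra h
    rw [← hc] at h
    have : T.card = R.card := congrArg card (erase_eq_of_notMem h)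
    omega
  refine (eq_of_subset_of_card_le (insert_subset hcR hSR.subset) ?_).symm
  rw [card_insert_of_notMem hcS]
  omega

theorem exists_elemCollapse_partnerClosed
    {K : Set (Finset (Finset V))} (hK : PartnerClosed σ f B K) (hfin : K.Finite)
    (hKL : K ≠ dualMapPt σ f B) : ∃ K', ElemCollapse K K' ∧ PartnerClosed σ f B K' := by
  obtain ⟨R, hR, hRL⟩ : ∃ R ∈ K, R ∉ dualMapPt σ f B := by
    by_contra! h
    exact hKL (Set.Subset.antisymm h hK.1)
  obtain ⟨S, hS, hmax⟩ := Set.exists_max_image _ (pairRank σ f)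
    (hfin.subset fun _ h => h.1) ⟨_, erase_core_mem_lowerChains hK hR hRL⟩
  have ⟨hSK, hSL, hcS⟩ := hS
  have hSD := hK.2.1 hSK
  have hpS : partner σ f S = insert (core σ f S) S := if_neg hcS
  refine ⟨K \ {S, partner σ f S}, ⟨S, partner σ f S, hSK, hK.2.2 S hSK hSL,
    hpS ▸ ssubset_insert hcS, fun R hR hSR => hpS ▸ eq_insert_core_of_ssubset hK hS hmax hR hSR,
    rfl⟩, ?_, ?_, ?_⟩
  · rintro R hR
    refine ⟨hK.1 hR, ?_⟩
    rintro (rfl | rfl)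
    exacts [hSL hR, partner_notMem_dualMapPt hSD hSL hR]
  · exact Set.sdiff_subset.trans hK.2.1
  · rintro R ⟨hR, hRS⟩ hRL
    have hRD := hK.2.1 hR
    refine ⟨hK.2.2 R hR hRL, ?_⟩
    rintro (h | h)
    · exact hRS (.inr (Set.mem_singleton_iff.2 (by rw [← h, partner_partner hRD hRL])))
    · exact hRS (.inl (by rw [← partner_partner hRD hRL, h, partner_partner hSD hSL]))

end Dual

theorem dualMap_collapses_general {V W : Type*} [DecidableEq V] [DecidableEq W]
    {A : Set (Finset W)} {B : Set (Finset V)}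
    (hA : IsComplex A) (hB : IsComplex B) (hBfin : B.Finite)
    (f : V → W)
    {σ : Finset W} (hσ : σ ∈ A) :
    dualMap σ f B ⊆ bary B ∧
    IsComplex (dualMap σ f B) ∧
    Collapses (dualMap σ f B) (dualMapPt σ f B) := by
  have hσne : σ.Nonempty := hA.1 σ hσ
  have hfin : (dualMap σ f B).Finite := (bary_finite hBfin).subset fun _ hS => hS.1
  refine ⟨fun _ hS => hS.1, dualMap_isComplex, ?_⟩
  exact collapses_of_invariant (PartnerClosed σ f B)
    (fun _ hK hKL => exists_elemCollapse_partnerClosed hK (hfin.subset hK.2.1) hKL)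
    (partnerClosed_dualMap hB hσne) hfin

/-- For a simplicial map `f : B → A` and a face `σ` of `A`, the dual `D(σ,f)` is a
subcomplex of `βB` and collapses to the subcomplex `(βf)^{-1}(σ)` of `βB`. -/
theorem dualMap_collapses {V W : Type*} [DecidableEq V] [DecidableEq W]
    {A : Set (Finset W)} {B : Set (Finset V)}
    (hA : IsComplex A) (hB : IsComplex B) (hBfin : B.Finite)
    (f : V → W) (hf : IsSimplicial B A f)
    {σ : Finset W} (hσ : σ ∈ A) :
    dualMap σ f B ⊆ bary B ∧
    IsComplex (dualMap σ f B) ∧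
    Collapses (dualMap σ f B) (dualMapPt σ f B) :=
  dualMap_collapses_general hA hB hBfin f hσ
end

section
/- Let (E_p)_{p∈P} be a system of simplicial complexes indexed by a poset P (meaning E_p ∩ E_{p′} = E_{p∧p′} when p,p′ have a lower bound, and = ∅ otherwise, with p ↦ E_p injective). If σ ∈ E_p and σ ∩ (dom(E_q) ∖ dom(D(E_q))) ≠ ∅, where D(E_q) = ⋃_{r<q} E_r, then p ≥ q. -/
/-- For a system `(E_p)_{p ∈ P}` of simplicial complexes indexed by a poset `P`
(intersections given by greatest lower bounds, empty when no lower bound exists, and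
`p ↦ E_p` injective): if `σ ∈ E_p` and `σ` meets `dom(E_q) ∖ dom(D(E_q))`, where
`D(E_q) = ⋃_{r < q} E_r`, then `p ≥ q`. -/
theorem system_support_le {V : Type*} {P : Type*} [PartialOrder P]
    (E : P → Set (Finset V))
    (hcplx : ∀ p, IsComplex (E p))
    (hinj : Function.Injective E)
    (hglb : ∀ p p' : P, (∃ r, r ≤ p ∧ r ≤ p') →
      ∃ m, m ≤ p ∧ m ≤ p' ∧ (∀ r, r ≤ p → r ≤ p' → r ≤ m) ∧ E p ∩ E p' = E m)
    (hdisj : ∀ p p' : P, ¬(∃ r, r ≤ p ∧ r ≤ p') → E p ∩ E p' = ∅)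
    {p q : P} {σ : Finset V} (hσ : σ ∈ E p)
    (hmeet : ∃ v ∈ σ, v ∈ domSet (E q) ∧ v ∉ domSet {τ | ∃ r, r < q ∧ τ ∈ E r}) :
    q ≤ p := by
  obtain ⟨v, hvσ, ⟨τ, hτq, hvτ⟩, hvD⟩ := hmeet
  have hvp : ({v} : Finset V) ∈ E p :=
    (hcplx p).2 σ hσ {v} (Finset.singleton_subset_iff.mpr hvσ) ⟨v, Finset.mem_singleton_self v⟩
  have hvq : ({v} : Finset V) ∈ E q :=
    (hcplx q).2 τ hτq {v} (Finset.singleton_subset_iff.mpr hvτ) ⟨v, Finset.mem_singleton_self v⟩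
  have hne : ∃ r, r ≤ p ∧ r ≤ q := by
    by_contra h
    have := hdisj p q h
    have : ({v} : Finset V) ∈ (∅ : Set (Finset V)) := this ▸ ⟨hvp, hvq⟩
    exact this
  obtain ⟨m, hmp, hmq, -, hEm⟩ := hglb p q hne
  have hvm : ({v} : Finset V) ∈ E m := hEm ▸ Set.mem_inter hvp hvq
  rcases eq_or_lt_of_le hmq with h | h
  · exact h ▸ hmp
  · exact absurd ⟨{v}, ⟨m, h, hvm⟩, Finset.mem_singleton_self v⟩ hvD
end
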